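/- arXiv:2505.15675 — 5 statements merged into one kernel-verified Lean document; each statement's English description precedes it below -/
import Mathlib

section
/- For every real number x > 1, the integral of 1/(x^{2m} - t^{2m}) over t from 0 to x-1 is strictly less than x^{1-2m} · ln(x), for any positive integer m. -/
open MeasureTheory Real

theorem stmt_0 (m : ℕ) (hm : 1 ≤ m) (x : ℝ) (hx : 1 < x) :
    ∫ t in (0:ℝ)..(x - 1), 1 / (x ^ (2 * m) - t ^ (2 * m))
      < x ^ ((1 : ℝ) - 2 * m) * Real.log x := by
  have hx0 : (0:ℝ) < x := by linarith
  have hab : (0:ℝ) < x - 1 := by linarith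
  obtain ⟨k, hk⟩ : ∃ k, 2 * m = k + 1 := ⟨2 * m - 1, by omega⟩
  set c : ℝ := x / x ^ (2 * m) with hc
  have hxpow : (0:ℝ) < x ^ (2 * m) := pow_pos hx0 _
  have hcpos : 0 < c := div_pos hx0 hxpow
  -- denominator positivity on the interval
  have hden : ∀ t : ℝ, t ∈ Set.Icc (0:ℝ) (x - 1) → 0 < x ^ (2 * m) - t ^ (2 * m) := by
    intro t ⟨ht0, ht1⟩
    have : t ^ (2 * m) < x ^ (2 * m) :=
      pow_lt_pow_left₀ (by linarith) ht0 (by omega)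
    linarith
  -- strict pointwise inequality for 0 < t ≤ x - 1
  have key : ∀ t : ℝ, 0 < t → t ≤ x - 1 →
      1 / (x ^ (2 * m) - t ^ (2 * m)) < c / (x - t) := by
    intro t ht0 ht1
    have htx : t < x := by linarith
    have hA : 0 < x ^ (2 * m) - t ^ (2 * m) := hden t ⟨ht0.le, ht1⟩
    have hxt : 0 < x - t := by linarith
    have hpow : t ^ k < x ^ k ∨ k = 0 := by
      rcases Nat.eq_zero_or_pos k with h | h
      · exact Or.inr h
      · exact Or.inl (pow_lt_pow_left₀ htx ht0.le (by omega))
    have hmul : x * t ^ (2 * m) < t * x ^ (2 * m) := by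
      rcases hpow with h | h
      · have htk : 0 < t ^ k := pow_pos ht0 k
        calc x * t ^ (2 * m) = (x * t) * t ^ k := by rw [hk]; ring
          _ < (x * t) * x ^ k := by
              exact mul_lt_mul_of_pos_left h (mul_pos hx0 ht0)
          _ = t * x ^ (2 * m) := by rw [hk]; ring
      · omega
    rw [div_lt_div_iff₀ hA hxt, hc, div_mul_eq_mul_div, lt_div_iff₀ hxpow]
    nlinarith [hmul]
  have hcont_f : ContinuousOn (fun t : ℝ => 1 / (x ^ (2 * m) - t ^ (2 * m)))
      (Set.Icc 0 (x - 1)) := by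
    apply ContinuousOn.div continuousOn_const
    · exact (continuous_const.sub (continuous_pow _)).continuousOn
    · intro t ht; exact (hden t ht).ne'
  have hcont_g : ContinuousOn (fun t : ℝ => c / (x - t)) (Set.Icc 0 (x - 1)) := by
    apply ContinuousOn.div continuousOn_const
    · exact (continuous_const.sub continuous_id).continuousOn
    · intro t ht; have := ht.2; intro h; linarith [sub_eq_zero.mp h]
  have hlt : (∫ t in (0:ℝ)..(x - 1), 1 / (x ^ (2 * m) - t ^ (2 * m)))
      < ∫ t in (0:ℝ)..(x - 1), c / (x - t) := by
    apply intervalIntegral.integral_lt_integral_of_continuousOn_of_le_of_exists_lt hab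
      hcont_f hcont_g
    · intro t ht; exact (key t ht.1 ht.2).le
    · exact ⟨x - 1, ⟨by linarith, le_refl _⟩, key (x - 1) hab (le_refl _)⟩
  have hInt : (∫ t in (0:ℝ)..(x - 1), c / (x - t)) = c * Real.log x := by
    have h1 : (∫ t in (0:ℝ)..(x - 1), c / (x - t))
        = ∫ t in (0:ℝ)..(x - 1), c * (fun s : ℝ => 1 / s) (x - t) := by
      simp only [mul_one_div]
    rw [h1, intervalIntegral.integral_const_mul,
      intervalIntegral.integral_comp_sub_left (fun s : ℝ => 1 / s) x]
    have : x - (x - 1) = 1 := by ring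
    rw [this, sub_zero, integral_one_div_of_pos one_pos hx0, div_one]
  have hrpow : x ^ ((1 : ℝ) - 2 * m) = c := by
    rw [hc, Real.rpow_sub hx0, Real.rpow_one]
    congr 1
    rw [← Real.rpow_natCast x (2 * m)]
    push_cast
    ring_nf
  rw [hrpow]
  linarith [hlt, hInt.ge, hInt.le]
end

section
/- Let m ≥ 1 be an integer. There exist constants C > 0 and N ∈ ℕ such that for all integers j ≥ N and all complex λ with |λ - j^{2m}| = (1/2) j^{2m-1}, the series ∑_{n=1}^{∞} 1/|λ - n^{2m}| converges and is bounded by C j^{1-2m} ln(j). -/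
/-!
Put `r = j^(q+1)` with `q + 2 = 2m`. On the circle `‖λ - j^(q+2)‖ = r/2`, the reverse triangle
inequality together with `(x - y) x^n ≤ x^(n+1) - y^(n+1)` gives, up to a constant factor,
`‖λ - k^(q+2)‖ ≳ (j - k + 1) r` for `k ≤ j` and `‖λ - k^(q+2)‖ ≳ (k - j) k j^q` for `k > j`.
Hence `1/‖λ - k^(q+2)‖ ≤ (4/r) a_k`, where `a_k = 1/(j - k + 1)` for `k ≤ j` and
`a_k = j/((k - j) k) = 1/(k - j) - 1/k` for `k > j`. Both ranges contribute at most the harmonic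
number `H_j ≤ 1 + log j` to the partial sums of `a`, so the series converges and its sum is at
most `8 H_j / r = O(j^(1-2m) log j)`.
-/

open Real Finset

lemma sub_mul_pow_le_pow_succ_sub_pow_succ {R : Type*} [CommRing R] [PartialOrder R]
    [IsOrderedRing R] {x y : R} (hy : 0 ≤ y) (hyx : y ≤ x) (n : ℕ) :
    (x - y) * x ^ n ≤ x ^ (n + 1) - y ^ (n + 1) := by
  have key : x ^ (n + 1) - y ^ (n + 1) = (x - y) * x ^ n + y * (x ^ n - y ^ n) := by ring
  rw [key]
  exact le_add_of_nonneg_right (mul_nonneg hy (sub_nonneg.2 (pow_le_pow_left₀ hy hyx n)))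

lemma Finset.sum_range_sub_sum_range_add_le {M : Type*} [AddCommGroup M] [PartialOrder M]
    [IsOrderedAddMonoid M] {g : ℕ → M} (hg : ∀ i, 0 ≤ g i) (j K : ℕ) :
    ∑ i ∈ range K, g i - ∑ i ∈ range K, g (j + i) ≤ ∑ i ∈ range j, g i := by
  have h := Finset.sum_range_add g j K
  rw [add_comm, Finset.sum_range_add] at h
  rw [sub_le_iff_le_add, ← h]
  exact le_add_of_nonneg_right (sum_nonneg fun i _ => hg _)

lemma harmonic_eq_sum_range_inv (j : ℕ) :
    (harmonic j : ℝ) = ∑ i ∈ range j, ((i : ℝ) + 1)⁻¹ := by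
  simp [harmonic]

lemma harmonic_le_two_mul_log {j : ℕ} (hj : 3 ≤ j) : (harmonic j : ℝ) ≤ 2 * Real.log j := by
  have hlog : 1 ≤ Real.log j := by
    rw [Real.le_log_iff_exp_le (by positivity)]
    exact exp_one_lt_three.le.trans (by exact_mod_cast hj)
  linarith [harmonic_le_one_add_log j]

noncomputable def distMajorant (j k : ℕ) : ℝ :=
  if k ≤ j then (((j - k : ℕ) : ℝ) + 1)⁻¹ else ((k - j : ℕ) : ℝ)⁻¹ - (k : ℝ)⁻¹

lemma distMajorant_nonneg (j k : ℕ) : 0 ≤ distMajorant j k := by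
  unfold distMajorant
  split_ifs with hkj
  · positivity
  · rw [sub_nonneg]
    exact inv_anti₀ (by norm_cast; omega) (by norm_cast; omega)

lemma sum_range_distMajorant_le (j K : ℕ) :
    ∑ n ∈ range K, distMajorant j (n + 1) ≤ 2 * harmonic j := by
  set g : ℕ → ℝ := fun i => ((i : ℝ) + 1)⁻¹
  have below : ∑ n ∈ range j, distMajorant j (n + 1) = harmonic j := by
    rw [harmonic_eq_sum_range_inv, ← sum_range_reflect]
    refine sum_congr rfl fun n hn => ?_
    have hn : n < j := mem_range.1 hn
    simp only [distMajorant, if_pos (show j - 1 - n + 1 ≤ j by omega),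
      show j - (j - 1 - n + 1) = n by omega]
  have above : ∑ i ∈ range K, distMajorant j (j + i + 1) ≤ harmonic j := calc
    _ = ∑ i ∈ range K, (g i - g (j + i)) := sum_congr rfl fun i _ => by
        simp only [distMajorant, if_neg (show ¬j + i + 1 ≤ j by omega),
          show j + i + 1 - j = i + 1 by omega, g]
        push_cast; ring_nf
    _ ≤ ∑ i ∈ range j, g i := by
        rw [sum_sub_distrib]
        exact sum_range_sub_sum_range_add_le (fun i => by positivity) j K
    _ = harmonic j := (harmonic_eq_sum_range_inv j).symm
  calc ∑ n ∈ range K, distMajorant j (n + 1)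
      ≤ ∑ n ∈ range (j + K), distMajorant j (n + 1) :=
        sum_le_sum_of_subset_of_nonneg (range_subset_range.2 (by omega))
          fun n _ _ => distMajorant_nonneg j (n + 1)
    _ ≤ 2 * harmonic j := by
        rw [sum_range_add, below, two_mul]
        exact add_le_add_right above _

lemma abs_pow_sub_pow_sub_le_norm_sub {n j k : ℕ} {lam : ℂ} {r : ℝ}
    (hlam : ‖lam - (j : ℂ) ^ n‖ = r) : |(k : ℝ) ^ n - (j : ℝ) ^ n| - r ≤ ‖lam - (k : ℂ) ^ n‖ := by
  have htri := norm_sub_le_norm_sub_add_norm_sub ((k : ℂ) ^ n) lam ((j : ℂ) ^ n)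
  have habs : ‖(k : ℂ) ^ n - (j : ℂ) ^ n‖ = |(k : ℝ) ^ n - (j : ℝ) ^ n| := by
    rw [← Real.norm_eq_abs, ← Complex.norm_real]; push_cast; rfl
  rw [norm_sub_rev _ lam, hlam, habs] at htri
  linarith

section Circle

variable {q j : ℕ} {lam : ℂ} (hlam : ‖lam - (j : ℂ) ^ (q + 2)‖ = 1 / 2 * (j : ℝ) ^ (q + 1))
include hlam

lemma le_norm_sub_pow_of_lt {k : ℕ} (hkj : k < j) :
    ((j : ℝ) - k + 1) * (j : ℝ) ^ (q + 1) / 4 ≤ ‖lam - (k : ℂ) ^ (q + 2)‖ := by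
  have hd : (1 : ℝ) ≤ (j : ℝ) - k := by
    linarith [(by exact_mod_cast hkj : (k : ℝ) + 1 ≤ j)]
  have hgap := sub_mul_pow_le_pow_succ_sub_pow_succ (Nat.cast_nonneg (α := ℝ) k)
    (by exact_mod_cast hkj.le : (k : ℝ) ≤ j) (q + 1)
  have hdist := abs_pow_sub_pow_sub_le_norm_sub (k := k) hlam
  have hr : 0 ≤ (j : ℝ) ^ (q + 1) := by positivity
  rw [abs_sub_comm, abs_of_nonneg (by nlinarith)] at hdist
  nlinarith

lemma le_norm_sub_pow_of_gt {k : ℕ} (hjk : j < k) :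
    ((k : ℝ) - j) * (k * (j : ℝ) ^ q) / 2 ≤ ‖lam - (k : ℂ) ^ (q + 2)‖ := by
  have hd : (1 : ℝ) ≤ (k : ℝ) - j := by
    linarith [(by exact_mod_cast hjk : (j : ℝ) + 1 ≤ k)]
  have hjk' : (j : ℝ) ≤ k := by exact_mod_cast hjk.le
  have hgap := sub_mul_pow_le_pow_succ_sub_pow_succ (Nat.cast_nonneg (α := ℝ) j) hjk' (q + 1)
  have hpow : (j : ℝ) ^ q * k ≤ (k : ℝ) ^ (q + 1) := by
    rw [pow_succ]; gcongr
  have hr : 0 ≤ (j : ℝ) ^ (q + 1) := by positivity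
  have hr_le : (j : ℝ) ^ (q + 1) ≤ (k : ℝ) ^ (q + 1) := by gcongr
  have hdist := abs_pow_sub_pow_sub_le_norm_sub (k := k) hlam
  rw [abs_of_nonneg (by nlinarith)] at hdist
  nlinarith

lemma one_div_norm_sub_pow_le_distMajorant (hj : 1 ≤ j) (k : ℕ) :
    1 / ‖lam - (k : ℂ) ^ (q + 2)‖ ≤ 4 / (j : ℝ) ^ (q + 1) * distMajorant j k := by
  have hr : 0 < (j : ℝ) ^ (q + 1) := by positivity
  rcases lt_trichotomy k j with hkj | rfl | hjk
  · have hd : (1 : ℝ) ≤ (j : ℝ) - k := by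
      linarith [(by exact_mod_cast hkj : (k : ℝ) + 1 ≤ j)]
    rw [distMajorant, if_pos hkj.le, Nat.cast_sub hkj.le]
    calc 1 / ‖lam - (k : ℂ) ^ (q + 2)‖ ≤ 1 / (((j : ℝ) - k + 1) * (j : ℝ) ^ (q + 1) / 4) :=
          one_div_le_one_div_of_le (by positivity) (le_norm_sub_pow_of_lt hlam hkj)
      _ = 4 / (j : ℝ) ^ (q + 1) * ((j : ℝ) - k + 1)⁻¹ := by field_simp
  · rw [hlam, distMajorant, if_pos le_rfl, Nat.sub_self, Nat.cast_zero, zero_add, inv_one,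
      mul_one, show 1 / (1 / 2 * (k : ℝ) ^ (q + 1)) = 2 / (k : ℝ) ^ (q + 1) by field_simp]
    gcongr
    norm_num
  · have hd : (1 : ℝ) ≤ (k : ℝ) - j := by
      linarith [(by exact_mod_cast hjk : (j : ℝ) + 1 ≤ k)]
    have hk : (0 : ℝ) < k := by linarith [(Nat.cast_nonneg j : (0 : ℝ) ≤ j)]
    have hmaj : 4 / (j : ℝ) ^ (q + 1) * (((k : ℝ) - j)⁻¹ - (k : ℝ)⁻¹)
        = 4 / (((k : ℝ) - j) * (k * (j : ℝ) ^ q)) := by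
      have : (k : ℝ) - j ≠ 0 := by linarith
      field_simp
      ring
    rw [distMajorant, if_neg hjk.not_ge, Nat.cast_sub hjk.le, hmaj]
    calc 1 / ‖lam - (k : ℂ) ^ (q + 2)‖ ≤ 1 / (((k : ℝ) - j) * (k * (j : ℝ) ^ q) / 2) :=
          one_div_le_one_div_of_le (by positivity) (le_norm_sub_pow_of_gt hlam hjk)
      _ ≤ 4 / (((k : ℝ) - j) * (k * (j : ℝ) ^ q)) := by
          rw [one_div_div]; gcongr; norm_num

end Circle

theorem summable_one_div_norm_sub_pow_and_tsum_le {q j : ℕ} (hj : 1 ≤ j) {lam : ℂ}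
    (hlam : ‖lam - (j : ℂ) ^ (q + 2)‖ = 1 / 2 * (j : ℝ) ^ (q + 1)) :
    Summable (fun n : ℕ => 1 / ‖lam - ((n : ℂ) + 1) ^ (q + 2)‖) ∧
      ∑' n : ℕ, 1 / ‖lam - ((n : ℂ) + 1) ^ (q + 2)‖ ≤ 8 * harmonic j / (j : ℝ) ^ (q + 1) := by
  have hterm (n : ℕ) : 1 / ‖lam - ((n : ℂ) + 1) ^ (q + 2)‖
      ≤ 4 / (j : ℝ) ^ (q + 1) * distMajorant j (n + 1) := by
    exact_mod_cast one_div_norm_sub_pow_le_distMajorant hlam hj (n + 1)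
  have hnonneg (n : ℕ) : 0 ≤ 1 / ‖lam - ((n : ℂ) + 1) ^ (q + 2)‖ := by positivity
  have hpartial (K : ℕ) : ∑ n ∈ range K, 1 / ‖lam - ((n : ℂ) + 1) ^ (q + 2)‖
      ≤ 8 * harmonic j / (j : ℝ) ^ (q + 1) := calc
    _ ≤ ∑ n ∈ range K, 4 / (j : ℝ) ^ (q + 1) * distMajorant j (n + 1) :=
        sum_le_sum fun n _ => hterm n
    _ = 4 / (j : ℝ) ^ (q + 1) * ∑ n ∈ range K, distMajorant j (n + 1) := (mul_sum ..).symm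
    _ ≤ 4 / (j : ℝ) ^ (q + 1) * (2 * harmonic j) := by
        gcongr; exact sum_range_distMajorant_le j K
    _ = 8 * harmonic j / (j : ℝ) ^ (q + 1) := by ring
  exact ⟨summable_of_sum_range_le hnonneg hpartial, Real.tsum_le_of_sum_range_le hnonneg hpartial⟩

theorem stmt_6 (m : ℕ) (hm : 1 ≤ m) :
    ∃ C > (0 : ℝ), ∃ N : ℕ, ∀ j : ℕ, N ≤ j → ∀ lam : ℂ,
      ‖lam - (j : ℂ) ^ (2 * m)‖ = (1 / 2) * (j : ℝ) ^ (2 * m - 1) →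
        Summable (fun n : ℕ => 1 / ‖lam - ((n : ℂ) + 1) ^ (2 * m)‖) ∧
          ∑' n : ℕ, 1 / ‖lam - ((n : ℂ) + 1) ^ (2 * m)‖
            ≤ C * (j : ℝ) ^ ((1 : ℝ) - 2 * m) * Real.log j := by
  obtain ⟨q, hq⟩ : ∃ q, 2 * m = q + 2 := ⟨2 * m - 2, by omega⟩
  have hq' : 2 * m - 1 = q + 1 := by omega
  have hexp : (1 : ℝ) - 2 * m = -((q + 1 : ℕ) : ℝ) := by
    have : (2 * m : ℝ) = q + 2 := by exact_mod_cast hq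
    push_cast; linarith
  refine ⟨16, by norm_num, 3, fun j hj lam hlam => ?_⟩
  rw [hq', hq] at *
  obtain ⟨hsum, hle⟩ := summable_one_div_norm_sub_pow_and_tsum_le (by omega) hlam
  refine ⟨hsum, hle.trans ?_⟩
  rw [hexp, Real.rpow_neg (Nat.cast_nonneg j), Real.rpow_natCast, div_eq_mul_inv]
  have hr : 0 < ((j : ℝ) ^ (q + 1))⁻¹ := by positivity
  nlinarith [harmonic_le_two_mul_log hj]
end

section
/- Let m ≥ 1 be an integer and λ ∈ ℂ lie on the circle |λ - j^{2m}| = (1/2) j^{2m-1} for some integer j ≥ 3. Then ∑_{n=1}^{j-2} 1/|λ - n^{2m}| ≤ ∫_0^{j-2} dt/((j-1)^{2m} - t^{2m}) ≤ (j-1)^{1-2m} ln(j-1). -/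
/-!
Write `f t = 1 / ((j - 1) ^ k - t ^ k)` with `k = 2m`. Since `λ` lies on the circle, the triangle
inequality together with the mean-value bounds `k b^(k-1) (a - b) ≤ a^k - b^k ≤ k a^(k-1) (a - b)`
give `‖λ - n^k‖ ≥ (j - 1)^k - (n - 1/2)^k`, i.e. `1 / ‖λ - n^k‖ ≤ f (n - 1/2)`. The function `f` is
the reciprocal of a positive concave function on `[0, j - 1)`, hence convex, so its value at the
midpoint of `[n - 1, n]` is at most its mean there (Hermite–Hadamard); summing over `n` gives the
first inequality. For the second, `x^k - t^k ≥ x^(k-1) (x - t)` bounds `f` by `x^(1-k) / (x - t)`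
with `x = j - 1`, whose integral over `[0, x - 1]` is `x^(1-k) log x`.
-/

open Real MeasureTheory Finset Set

section PowSubPow

variable {R : Type*} [CommRing R] [LinearOrder R] [IsStrictOrderedRing R] {a b : R}

theorem pow_mul_sub_le_pow_succ_sub_pow_succ (hb : 0 ≤ b) (hab : b ≤ a) (k : ℕ) :
    a ^ k * (a - b) ≤ a ^ (k + 1) - b ^ (k + 1) := by
  have : b * b ^ k ≤ b * a ^ k := mul_le_mul_of_nonneg_left (pow_le_pow_left₀ hb hab k) hb
  linarith [pow_succ' a k, pow_succ' b k]

theorem succ_mul_pow_mul_sub_le_pow_succ_sub_pow_succ (hb : 0 ≤ b) (hab : b ≤ a) (k : ℕ) :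
    (k + 1) * b ^ k * (a - b) ≤ a ^ (k + 1) - b ^ (k + 1) := by
  rw [← geom_sum₂_mul]
  refine mul_le_mul_of_nonneg_right ?_ (sub_nonneg.2 hab)
  calc ((k : R) + 1) * b ^ k = ∑ _i ∈ range (k + 1), b ^ k := by simp
    _ ≤ ∑ i ∈ range (k + 1), a ^ i * b ^ (k + 1 - 1 - i) := by
      refine sum_le_sum fun i hi => ?_
      have hik : i + (k - i) = k := by have := mem_range.1 hi; omega
      calc b ^ k = b ^ i * b ^ (k - i) := by rw [← pow_add, hik]
        _ ≤ a ^ i * b ^ (k + 1 - 1 - i) := by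
          rw [Nat.add_sub_cancel]; gcongr

theorem pow_succ_sub_pow_succ_le_succ_mul_pow_mul_sub (hb : 0 ≤ b) (hab : b ≤ a) (k : ℕ) :
    a ^ (k + 1) - b ^ (k + 1) ≤ (k + 1) * a ^ k * (a - b) := by
  have ha : 0 ≤ a := hb.trans hab
  rw [← geom_sum₂_mul]
  refine mul_le_mul_of_nonneg_right ?_ (sub_nonneg.2 hab)
  calc ∑ i ∈ range (k + 1), a ^ i * b ^ (k + 1 - 1 - i)
    _ ≤ ∑ _i ∈ range (k + 1), a ^ k := by
        refine sum_le_sum fun i hi => ?_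
        have hik : i + (k - i) = k := by have := mem_range.1 hi; omega
        calc a ^ i * b ^ (k + 1 - 1 - i) ≤ a ^ i * a ^ (k - i) := by
              rw [Nat.add_sub_cancel]; gcongr
          _ = a ^ k := by rw [← pow_add, hik]
    _ = ((k : R) + 1) * a ^ k := by simp

end PowSubPow

theorem sub_one_pow_sub_sub_half_pow_le {k : ℕ} (hk : k ≠ 0) {j s : ℝ} (hs : 1 / 2 ≤ s)
    (hsj : s + 1 ≤ j) :
    (j - 1) ^ k - (s - 1 / 2) ^ k ≤ j ^ k - s ^ k - 1 / 2 * j ^ (k - 1) := by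
  obtain ⟨p, rfl⟩ := Nat.exists_eq_add_one_of_ne_zero hk
  rw [Nat.add_sub_cancel]
  -- split `j ^ k - (j - 1) ^ k` at `j - 1/2`: the upper half pays for the `j ^ (k-1)` term,
  -- the lower half dominates `s ^ k - (s - 1/2) ^ k`
  have hupper := pow_mul_sub_le_pow_succ_sub_pow_succ (a := j) (b := j - 1 / 2)
    (by linarith) (by linarith) p
  have hlower := succ_mul_pow_mul_sub_le_pow_succ_sub_pow_succ (a := j - 1 / 2) (b := j - 1)
    (by linarith) (by linarith) p
  have hs_step := pow_succ_sub_pow_succ_le_succ_mul_pow_mul_sub (a := s) (b := s - 1 / 2)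
    (by linarith) (by linarith) p
  have hsj_pow : ((p : ℝ) + 1) * s ^ p ≤ ((p : ℝ) + 1) * (j - 1) ^ p := by
    gcongr
    linarith
  nlinarith

theorem one_div_norm_sub_pow_le {k : ℕ} (hk : k ≠ 0) {j s : ℝ} (hs : 1 / 2 ≤ s) (hsj : s + 1 ≤ j)
    {lam : ℂ} (hlam : ‖lam - (j : ℂ) ^ k‖ ≤ 1 / 2 * j ^ (k - 1)) :
    1 / ‖lam - (s : ℂ) ^ k‖ ≤ 1 / ((j - 1) ^ k - (s - 1 / 2) ^ k) := by
  have hpos : 0 < (j - 1) ^ k - (s - 1 / 2) ^ k :=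
    sub_pos.2 (pow_lt_pow_left₀ (by linarith) (by linarith) hk)
  have hdist : ‖(j : ℂ) ^ k - (s : ℂ) ^ k‖ = j ^ k - s ^ k := by
    rw [← Complex.ofReal_pow, ← Complex.ofReal_pow, ← Complex.ofReal_sub, Complex.norm_real,
      Real.norm_of_nonneg (sub_nonneg.2 (pow_le_pow_left₀ (by linarith) (by linarith) k))]
  have htri := norm_sub_le_norm_sub_add_norm_sub ((j : ℂ) ^ k) lam ((s : ℂ) ^ k)
  rw [hdist, norm_sub_rev] at htri
  refine one_div_le_one_div_of_le hpos ?_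
  linarith [sub_one_pow_sub_sub_half_pow_le hk hs hsj]

theorem ConcaveOn.convexOn_one_div {E : Type*} [AddCommGroup E] [Module ℝ E] {s : Set E}
    {g : E → ℝ} (hg : ConcaveOn ℝ s g) (hpos : ∀ x ∈ s, 0 < g x) :
    ConvexOn ℝ s fun x => 1 / g x := by
  refine ⟨hg.1, fun x hx y hy a b ha hb hab => ?_⟩
  have hgx := hpos x hx
  have hgy := hpos y hy
  have hmix : 0 < a * g x + b * g y := by
    rcases ha.lt_or_eq with ha | rfl
    · positivity
    · simp only [zero_add] at hab; simp [hab, hgy]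
  calc 1 / g (a • x + b • y) ≤ 1 / (a * g x + b * g y) :=
        one_div_le_one_div_of_le hmix (hg.2 hx hy ha hb hab)
    _ ≤ a * (1 / g x) + b * (1 / g y) := by
        rw [div_le_iff₀ hmix]
        have : 0 ≤ a * b * (g x - g y) ^ 2 / (g x * g y) := by positivity
        have key : (a * (1 / g x) + b * (1 / g y)) * (a * g x + b * g y) - (a + b) ^ 2
            = a * b * (g x - g y) ^ 2 / (g x * g y) := by
          field_simp; ring
        rw [hab] at key
        linarith

theorem convexOn_one_div_pow_sub_pow (x : ℝ) (k : ℕ) (hk : k ≠ 0) :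
    ConvexOn ℝ (Ico 0 x) fun t => 1 / (x ^ k - t ^ k) :=
  ((concaveOn_const _ (convex_Ici 0)).sub (convexOn_pow k)).subset Ico_subset_Ici_self
    (convex_Ico 0 x) |>.convexOn_one_div fun _ ht =>
      sub_pos.2 (pow_lt_pow_left₀ ht.2 ht.1 hk)

theorem intervalIntegrable_one_div_pow_sub_pow {k : ℕ} (hk : k ≠ 0) {x a b : ℝ} (ha : 0 ≤ a)
    (hab : a ≤ b) (hbx : b < x) :
    IntervalIntegrable (fun t => 1 / (x ^ k - t ^ k)) volume a b := by
  refine ContinuousOn.intervalIntegrable (continuousOn_const.div (by fun_prop) fun t ht => ?_)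
  rw [Set.uIcc_of_le hab] at ht
  exact (sub_pos.2 (pow_lt_pow_left₀ (by linarith [ht.2]) (ha.trans ht.1) hk)).ne'

theorem ConvexOn.sub_mul_le_intervalIntegral {f : ℝ → ℝ} {a b : ℝ} (hab : a ≤ b)
    (hf : ConvexOn ℝ (Icc a b) f) (hint : IntervalIntegrable f volume a b) :
    (b - a) * f ((a + b) / 2) ≤ ∫ x in a..b, f x := by
  have hreflect : ∫ x in a..b, f (a + b - x) = ∫ x in a..b, f x := by
    rw [intervalIntegral.integral_comp_sub_left]; congr 1 <;> ring
  have hint' : IntervalIntegrable (fun x => f (a + b - x)) volume a b := by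
    simpa using (hint.comp_sub_left (a + b)).symm
  have hmid : ∀ x ∈ Icc a b, 2 * f ((a + b) / 2) ≤ f x + f (a + b - x) := by
    intro x hx
    have hx' : a + b - x ∈ Icc a b := ⟨by linarith [hx.2], by linarith [hx.1]⟩
    have := hf.2 hx hx' (by norm_num : (0 : ℝ) ≤ 1 / 2) (by norm_num : (0 : ℝ) ≤ 1 / 2)
      (by norm_num)
    simp only [smul_eq_mul] at this
    rw [show 1 / 2 * x + 1 / 2 * (a + b - x) = (a + b) / 2 by ring] at this
    linarith
  have := intervalIntegral.integral_mono_on hab intervalIntegrable_const (hint.add hint') hmid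
  rw [intervalIntegral.integral_const, intervalIntegral.integral_add hint hint', hreflect,
    smul_eq_mul] at this
  linarith

theorem sum_Icc_intervalIntegral_eq {f : ℝ → ℝ} (N : ℕ)
    (hf : IntervalIntegrable f volume 0 N) :
    ∑ n ∈ Icc 1 N, ∫ t in (n : ℝ) - 1..n, f t = ∫ t in (0 : ℝ)..N, f t := by
  induction N with
  | zero => simp
  | succ N ih =>
    have hN : (N : ℝ) ∈ uIcc 0 ((N + 1 : ℕ) : ℝ) :=
      mem_uIcc_of_le (by positivity) (by push_cast; linarith)
    have hleft := hf.mono_set (Set.uIcc_subset_uIcc_left hN)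
    have hright := hf.mono_set (Set.uIcc_subset_uIcc_right hN)
    rw [sum_Icc_succ_top (by omega), ih hleft,
      ← intervalIntegral.integral_add_adjacent_intervals hleft hright]
    norm_num

theorem one_div_norm_sub_pow_le_intervalIntegral {k : ℕ} (hk : k ≠ 0) {j s : ℝ} (hs : 1 ≤ s)
    (hsj : s + 1 < j) {lam : ℂ} (hlam : ‖lam - (j : ℂ) ^ k‖ ≤ 1 / 2 * j ^ (k - 1)) :
    1 / ‖lam - (s : ℂ) ^ k‖ ≤ ∫ t in s - 1..s, 1 / ((j - 1) ^ k - t ^ k) := by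
  have hsub : Icc (s - 1) s ⊆ Ico 0 (j - 1) := Icc_subset_Ico (by linarith) (by linarith)
  have hint := intervalIntegrable_one_div_pow_sub_pow hk (x := j - 1) (a := s - 1) (b := s)
    (by linarith) (by linarith) (by linarith)
  have hmid := ((convexOn_one_div_pow_sub_pow (j - 1) k hk).subset hsub
    (convex_Icc _ _)).sub_mul_le_intervalIntegral (by linarith) hint
  rw [show s - (s - 1) = 1 by ring, show (s - 1 + s) / 2 = s - 1 / 2 by ring, one_mul] at hmid
  exact (one_div_norm_sub_pow_le hk (by linarith) hsj.le hlam).trans hmid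

theorem intervalIntegral_one_div_pow_sub_pow_le {x : ℝ} (hx : 1 ≤ x) {k : ℕ} (hk : k ≠ 0) :
    ∫ t in (0 : ℝ)..x - 1, 1 / (x ^ k - t ^ k) ≤ x ^ ((1 : ℝ) - k) * log x := by
  have hx0 : 0 < x := by linarith
  obtain ⟨p, rfl⟩ := Nat.exists_eq_add_one_of_ne_zero hk
  have hexp : x ^ ((1 : ℝ) - ↑(p + 1)) = (x ^ p)⁻¹ := by
    rw [show (1 : ℝ) - ↑(p + 1) = -(p : ℝ) by push_cast; ring, rpow_neg hx0.le, rpow_natCast]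
  have hbound : ∀ t ∈ Icc 0 (x - 1), 1 / (x ^ (p + 1) - t ^ (p + 1)) ≤ (x ^ p)⁻¹ * (x - t)⁻¹ := by
    intro t ht
    rw [← mul_inv, ← one_div]
    exact one_div_le_one_div_of_le (mul_pos (pow_pos hx0 p) (by linarith [ht.2]))
      (pow_mul_sub_le_pow_succ_sub_pow_succ ht.1 (by linarith [ht.2]) p)
  have hint := intervalIntegrable_one_div_pow_sub_pow hk (x := x) le_rfl (by linarith)
    (by linarith : x - 1 < x)
  have hint' : IntervalIntegrable (fun t => (x ^ p)⁻¹ * (x - t)⁻¹) volume 0 (x - 1) := by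
    refine ContinuousOn.intervalIntegrable (continuousOn_const.mul (ContinuousOn.inv₀
      (by fun_prop) fun t ht => ?_))
    rw [Set.uIcc_of_le (by linarith)] at ht
    linarith [ht.2]
  calc ∫ t in (0 : ℝ)..x - 1, 1 / (x ^ (p + 1) - t ^ (p + 1))
    _ ≤ ∫ t in (0 : ℝ)..x - 1, (x ^ p)⁻¹ * (x - t)⁻¹ :=
        intervalIntegral.integral_mono_on (by linarith) hint hint' hbound
    _ = x ^ ((1 : ℝ) - ↑(p + 1)) * log x := by
        rw [intervalIntegral.integral_const_mul, intervalIntegral.integral_comp_sub_left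
          (fun u => u⁻¹), sub_sub_cancel, sub_zero, integral_inv_of_pos one_pos hx0, div_one,
          hexp]

theorem sum_one_div_norm_sub_pow_le_intervalIntegral {k : ℕ} (hk : k ≠ 0) {j : ℝ} {N : ℕ}
    (hN : (N : ℝ) + 1 < j) {lam : ℂ} (hlam : ‖lam - (j : ℂ) ^ k‖ ≤ 1 / 2 * j ^ (k - 1)) :
    ∑ n ∈ Icc 1 N, 1 / ‖lam - (n : ℂ) ^ k‖ ≤ ∫ t in (0 : ℝ)..N, 1 / ((j - 1) ^ k - t ^ k) := by
  rw [← sum_Icc_intervalIntegral_eq N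
    (intervalIntegrable_one_div_pow_sub_pow hk le_rfl (Nat.cast_nonneg N) (by linarith))]
  refine sum_le_sum fun n hn => ?_
  have hn1 : (1 : ℝ) ≤ n := by exact_mod_cast (mem_Icc.1 hn).1
  have hnN : (n : ℝ) ≤ N := by exact_mod_cast (mem_Icc.1 hn).2
  simpa using one_div_norm_sub_pow_le_intervalIntegral hk hn1 (by linarith) hlam

theorem stmt_7 (m j : ℕ) (hm : 1 ≤ m) (hj : 3 ≤ j) (lam : ℂ)
    (hlam : ‖lam - (j : ℂ) ^ (2 * m)‖ = (1 / 2) * (j : ℝ) ^ (2 * m - 1)) :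
    ∑ n ∈ Finset.Icc 1 (j - 2), 1 / ‖lam - (n : ℂ) ^ (2 * m)‖
        ≤ ∫ t in (0:ℝ)..((j : ℝ) - 2), 1 / (((j : ℝ) - 1) ^ (2 * m) - t ^ (2 * m)) ∧
      ∫ t in (0:ℝ)..((j : ℝ) - 2), 1 / (((j : ℝ) - 1) ^ (2 * m) - t ^ (2 * m))
        ≤ ((j : ℝ) - 1) ^ ((1 : ℝ) - 2 * m) * Real.log ((j : ℝ) - 1) := by
  have hk : 2 * m ≠ 0 := by omega
  have hjR : (3 : ℝ) ≤ j := by exact_mod_cast hj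
  have hcast : ((j - 2 : ℕ) : ℝ) = j - 2 := by rw [Nat.cast_sub (by omega)]; norm_num
  constructor
  · rw [← hcast]
    exact sum_one_div_norm_sub_pow_le_intervalIntegral hk (by linarith) (by simpa using hlam.le)
  · have := intervalIntegral_one_div_pow_sub_pow_le (x := (j : ℝ) - 1) (by linarith) hk
    rw [show (j : ℝ) - 1 - 1 = j - 2 by ring] at this
    simpa using this
end

section
/- Let m ≥ 1 be an integer. For all sufficiently large integers j and all λ on the circle |λ - j^{2m}| = (1/2) j^{2m-1}, one has ∑_{n=j+2}^{∞} 1/|λ - n^{2m}| ≤ (j+1)^{1-2m} ln(j). -/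
/-! With p = 2m and k ≥ j + 2, `k^p - j^p ≥ j^(p-2) (k² - j²)`, and the radius `j^(p-1)/2` of the
circle is at most a quarter of this, so `|λ - k^p| ≥ (3/4) j^(p-2) (k - j)(k + j)`. By partial
fractions the series `∑ 1/((k - j)(k + j))` telescopes to `(1/2j) ∑_{d=2}^{2j+1} 1/d ≤ log(2j+1)/2j`,
so the sum is at most `(2/3) j^(1-p) log(2j+1)`, which is below `(j+1)^(1-p) log j` as soon as
`j ≥ 27` (then `(2j+1)³ ≤ j⁴`) and `j + 1 ≥ 9(p-1)` (then `(1 + 1/j)^(p-1) ≤ 9/8` by Bernoulli). -/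

open Real

section Telescoping

open Finset

lemma sum_range_inv_add_two_le_log (K : ℕ) :
    ∑ i ∈ range K, ((i : ℝ) + 2)⁻¹ ≤ log (K + 1) := by
  have h := harmonic_le_one_add_log (K + 1)
  rw [harmonic, sum_range_succ'] at h
  push_cast at h
  simp only [add_assoc, one_add_one_eq_two, inv_one] at h
  linarith

lemma sum_range_inv_sub_inv_add_le (K D : ℕ) :
    ∑ n ∈ range D, (((n : ℝ) + 2)⁻¹ - ((n : ℝ) + 2 + K)⁻¹)
      ≤ ∑ i ∈ range K, ((i : ℝ) + 2)⁻¹ := by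
  set g : ℕ → ℝ := fun n => ∑ i ∈ range K, ((n : ℝ) + i + 2)⁻¹
  have hg : ∀ n, g n - g (n + 1) = ((n : ℝ) + 2)⁻¹ - ((n : ℝ) + 2 + K)⁻¹ := by
    intro n
    have h := (sum_range_succ (fun i => ((n : ℝ) + i + 2)⁻¹) K).symm.trans
      (sum_range_succ' (fun i => ((n : ℝ) + i + 2)⁻¹) K)
    have hshift : g (n + 1) = ∑ i ∈ range K, ((n : ℝ) + (i + 1 : ℕ) + 2)⁻¹ :=
      sum_congr rfl fun i _ => by push_cast; ring_nf
    rw [hshift]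
    simp only [g, Nat.cast_zero, add_zero] at h ⊢
    rw [add_right_comm (n : ℝ) 2]
    linarith
  have hg0 : g 0 = ∑ i ∈ range K, ((i : ℝ) + 2)⁻¹ := by simp [g]
  have hgD : 0 ≤ g D := by positivity
  rw [← hg0, ← sum_congr rfl fun n _ => hg n, sum_range_sub']
  linarith

lemma sum_range_inv_mul_add_le (K D : ℕ) (hK : 0 < K) :
    ∑ n ∈ range D, (((n : ℝ) + 2) * ((n : ℝ) + 2 + K))⁻¹ ≤ log (K + 1) / K := by
  have hK' : (0 : ℝ) < K := by exact_mod_cast hK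
  have hsplit : ∀ n : ℕ, (((n : ℝ) + 2) * ((n : ℝ) + 2 + K))⁻¹
      = (K : ℝ)⁻¹ * (((n : ℝ) + 2)⁻¹ - ((n : ℝ) + 2 + K)⁻¹) := by
    intro n
    field_simp
    ring
  rw [sum_congr rfl fun n _ => hsplit n, ← mul_sum, inv_mul_eq_div]
  gcongr
  exact (sum_range_inv_sub_inv_add_le K D).trans (sum_range_inv_add_two_le_log K)

end Telescoping

lemma summable_inv_mul_add (K : ℕ) (hK : 0 < K) :
    Summable fun n : ℕ => (((n : ℝ) + 2) * ((n : ℝ) + 2 + K))⁻¹ :=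
  summable_of_sum_range_le (fun _ => by positivity) fun D => sum_range_inv_mul_add_le K D hK

lemma tsum_inv_mul_add_le (K : ℕ) (hK : 0 < K) :
    ∑' n : ℕ, (((n : ℝ) + 2) * ((n : ℝ) + 2 + K))⁻¹ ≤ log (K + 1) / K :=
  Real.tsum_le_of_sum_range_le (fun _ => by positivity) fun D => sum_range_inv_mul_add_le K D hK

lemma pow_sub_two_mul_sq_sub_sq_le {p : ℕ} (hp : 2 ≤ p) {x y : ℝ} (hy : 0 ≤ y) (hxy : y ≤ x) :
    y ^ (p - 2) * (x ^ 2 - y ^ 2) ≤ x ^ p - y ^ p := by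
  obtain ⟨r, rfl⟩ := Nat.exists_eq_add_of_le' hp
  have h := pow_le_pow_left₀ hy hxy r
  rw [Nat.add_sub_cancel, pow_add, pow_add]
  nlinarith [sq_nonneg x]

lemma le_norm_sub_pow {p : ℕ} (hp : 2 ≤ p) {x y : ℝ} (hy : 0 ≤ y) (hxy : y + 1 ≤ x)
    {lam : ℂ} (hlam : ‖lam - (y : ℂ) ^ p‖ ≤ y ^ (p - 1) / 2) :
    3 / 4 * y ^ (p - 2) * (x ^ 2 - y ^ 2) ≤ ‖lam - (x : ℂ) ^ p‖ := by
  have hnorm : ‖(x : ℂ) ^ p - (y : ℂ) ^ p‖ = x ^ p - y ^ p := by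
    rw [← Complex.ofReal_pow, ← Complex.ofReal_pow, ← Complex.ofReal_sub, Complex.norm_real,
      Real.norm_of_nonneg (sub_nonneg.2 (pow_le_pow_left₀ hy (by linarith) p))]
  have htri := norm_sub_le_norm_sub_add_norm_sub ((x : ℂ) ^ p) lam ((y : ℂ) ^ p)
  rw [hnorm, norm_sub_rev] at htri
  have hpow : y ^ (p - 1) = y ^ (p - 2) * y := by
    rw [← pow_succ]; congr 1; omega
  have hsq : 2 * y ≤ x ^ 2 - y ^ 2 := by nlinarith
  have hB : 0 ≤ y ^ (p - 2) := by positivity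
  nlinarith [pow_sub_two_mul_sq_sub_sq_le hp hy (by linarith : y ≤ x),
    mul_le_mul_of_nonneg_left hsq hB]

lemma one_div_norm_sub_natCast_pow_le {p : ℕ} (hp : 2 ≤ p) {j : ℕ} (hj : 0 < j) {lam : ℂ}
    (hlam : ‖lam - (j : ℂ) ^ p‖ ≤ (j : ℝ) ^ (p - 1) / 2) (n : ℕ) :
    1 / ‖lam - ((n + j + 2 : ℕ) : ℂ) ^ p‖
      ≤ 4 / 3 * ((j : ℝ) ^ (p - 2))⁻¹ * (((n : ℝ) + 2) * ((n : ℝ) + 2 + (2 * j : ℕ)))⁻¹ := by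
  have hj0 : (0 : ℝ) < j := by exact_mod_cast hj
  have h := le_norm_sub_pow hp hj0.le (x := (n + j + 2 : ℕ)) (by push_cast; linarith)
    (lam := lam) (by rwa [Complex.ofReal_natCast])
  have hfac : ((n + j + 2 : ℕ) : ℝ) ^ 2 - (j : ℝ) ^ 2
      = ((n : ℝ) + 2) * ((n : ℝ) + 2 + (2 * j : ℕ)) := by push_cast; ring
  rw [hfac, Complex.ofReal_natCast] at h
  calc 1 / ‖lam - ((n + j + 2 : ℕ) : ℂ) ^ p‖
      ≤ 1 / (3 / 4 * (j : ℝ) ^ (p - 2) * (((n : ℝ) + 2) * ((n : ℝ) + 2 + (2 * j : ℕ)))) :=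
        one_div_le_one_div_of_le (by positivity) h
    _ = _ := by field_simp

lemma tsum_one_div_norm_sub_natCast_pow_le {p : ℕ} (hp : 2 ≤ p) {j : ℕ} (hj : 0 < j) {lam : ℂ}
    (hlam : ‖lam - (j : ℂ) ^ p‖ ≤ (j : ℝ) ^ (p - 1) / 2) :
    ∑' n : ℕ, 1 / ‖lam - ((n + j + 2 : ℕ) : ℂ) ^ p‖
      ≤ 2 / 3 * log (2 * j + 1) / (j : ℝ) ^ (p - 1) := by
  have hK : 0 < 2 * j := by omega
  have hterm := one_div_norm_sub_natCast_pow_le hp hj hlam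
  have hsum := (summable_inv_mul_add _ hK).mul_left (4 / 3 * ((j : ℝ) ^ (p - 2))⁻¹)
  calc ∑' n : ℕ, 1 / ‖lam - ((n + j + 2 : ℕ) : ℂ) ^ p‖
      ≤ ∑' n : ℕ, 4 / 3 * ((j : ℝ) ^ (p - 2))⁻¹ *
          (((n : ℝ) + 2) * ((n : ℝ) + 2 + (2 * j : ℕ)))⁻¹ :=
        Summable.tsum_le_tsum hterm (hsum.of_nonneg_of_le (fun _ => by positivity) hterm) hsum
    _ = 4 / 3 * ((j : ℝ) ^ (p - 2))⁻¹ *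
          ∑' n : ℕ, (((n : ℝ) + 2) * ((n : ℝ) + 2 + (2 * j : ℕ)))⁻¹ := tsum_mul_left
    _ ≤ 4 / 3 * ((j : ℝ) ^ (p - 2))⁻¹ * (log ((2 * j : ℕ) + 1) / (2 * j : ℕ)) := by
        gcongr
        exact tsum_inv_mul_add_le _ hK
    _ = 2 / 3 * log (2 * j + 1) / (j : ℝ) ^ (p - 1) := by
        rw [show p - 1 = p - 2 + 1 by omega, pow_succ]
        push_cast
        field_simp
        ring

lemma add_one_pow_le (q : ℕ) {x : ℝ} (hx : 0 ≤ x) (hq : 9 * q ≤ x + 1) :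
    (x + 1) ^ q ≤ 9 / 8 * x ^ q := by
  have hx1 : 0 < x + 1 := by linarith
  have hb := one_add_mul_le_pow (a := -(x + 1)⁻¹) (by
    have : (x + 1)⁻¹ ≤ 1 := inv_le_one_of_one_le₀ (by linarith)
    linarith) q
  rw [show 1 + -(x + 1)⁻¹ = x / (x + 1) by field_simp; ring, div_pow,
    le_div_iff₀ (by positivity)] at hb
  have hq' : (q : ℝ) * (x + 1)⁻¹ ≤ 1 / 9 := by
    rw [← div_eq_mul_inv, div_le_iff₀ hx1]; linarith
  nlinarith [pow_pos hx1 q]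

lemma log_two_mul_add_one_le {x : ℝ} (hx : 27 ≤ x) : log (2 * x + 1) ≤ 4 / 3 * log x := by
  have hpow : (2 * x + 1) ^ 3 ≤ x ^ 4 :=
    calc (2 * x + 1) ^ 3 ≤ (3 * x) ^ 3 := by gcongr; linarith
      _ = 27 * x ^ 3 := by ring
      _ ≤ x * x ^ 3 := by gcongr
      _ = x ^ 4 := by ring
  have h := log_le_log (by positivity) hpow
  rw [log_pow, log_pow] at h
  push_cast at h
  linarith

lemma log_two_mul_add_one_div_pow_le (q : ℕ) {x : ℝ} (hx : 27 ≤ x) (hq : 9 * q ≤ x + 1) :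
    2 / 3 * log (2 * x + 1) / x ^ q ≤ log x / (x + 1) ^ q := by
  have hx0 : 0 < x := by linarith
  have hlog : 0 ≤ log x := log_nonneg (by linarith)
  rw [div_le_div_iff₀ (by positivity) (by positivity)]
  calc 2 / 3 * log (2 * x + 1) * (x + 1) ^ q
      ≤ 2 / 3 * (4 / 3 * log x) * (9 / 8 * x ^ q) := by
        gcongr
        · exact log_two_mul_add_one_le hx
        · exact add_one_pow_le q hx0.le hq
    _ = log x * x ^ q := by ring

theorem stmt_9 (m : ℕ) (hm : 1 ≤ m) :
    ∃ N : ℕ, ∀ j : ℕ, N ≤ j → ∀ lam : ℂ,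
      ‖lam - (j : ℂ) ^ (2 * m)‖ = (1 / 2) * (j : ℝ) ^ (2 * m - 1) →
        ∑' n : ℕ, 1 / ‖lam - ((n + j + 2 : ℕ) : ℂ) ^ (2 * m)‖
          ≤ ((j : ℝ) + 1) ^ ((1 : ℝ) - 2 * m) * Real.log j := by
  refine ⟨18 * m + 27, fun j hj lam hlam => ?_⟩
  calc ∑' n : ℕ, 1 / ‖lam - ((n + j + 2 : ℕ) : ℂ) ^ (2 * m)‖
      ≤ 2 / 3 * log (2 * j + 1) / (j : ℝ) ^ (2 * m - 1) :=
        tsum_one_div_norm_sub_natCast_pow_le (by omega) (by omega) (by rw [hlam]; linarith)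
    _ ≤ log j / ((j : ℝ) + 1) ^ (2 * m - 1) :=
        log_two_mul_add_one_div_pow_le _ (by exact_mod_cast (by omega : 27 ≤ j))
          (by exact_mod_cast (by omega : 9 * (2 * m - 1) ≤ j + 1))
    _ = ((j : ℝ) + 1) ^ ((1 : ℝ) - 2 * m) * log j := by
        rw [show (1 : ℝ) - 2 * m = -((2 * m - 1 : ℕ) : ℝ) by
              push_cast [Nat.cast_sub (by omega : 1 ≤ 2 * m)]; ring,
          rpow_neg (by positivity), rpow_natCast, div_eq_inv_mul]
end

section
/- Let H be a separable Hilbert space, {e_n}_{n≥0} a Riesz basis of H with lower and upper frame bounds a, A > 0 (i.e., a‖u‖² ≤ ∑_n |⟨u,e_n⟩|² ≤ A‖u‖² for all u, together with completeness and ℓ²-independence), and {d_n}_{n≥0} ⊂ H with ∑_n ‖d_n - e_n‖² < a²/A. Then {d_n} is complete in H. -/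
/-!
If `u` is orthogonal to every `d n`, then `⟪u, e n⟫ = ⟪u, e n - d n⟫`, so Cauchy–Schwarz bounds the
frame sum of `u` by `‖u‖² ∑ ‖d n - e n‖² < (a² / A) ‖u‖² ≤ a ‖u‖²`, contradicting the lower frame
bound unless `u = 0`.
-/

open scoped InnerProductSpace

section

variable {𝕜 E ι : Type*} [RCLike 𝕜] [NormedAddCommGroup E] [InnerProductSpace 𝕜 E]

theorem norm_inner_sq_le_of_inner_eq_zero {u d e : E} (hu : ⟪u, d⟫_𝕜 = 0) :
    ‖⟪u, e⟫_𝕜‖ ^ 2 ≤ ‖u‖ ^ 2 * ‖d - e‖ ^ 2 := by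
  have h : ⟪u, e⟫_𝕜 = ⟪u, e - d⟫_𝕜 := by rw [inner_sub_right, hu, sub_zero]
  calc ‖⟪u, e⟫_𝕜‖ ^ 2 ≤ (‖u‖ * ‖e - d‖) ^ 2 := by
        rw [h]; gcongr; exact norm_inner_le_norm u (e - d)
    _ = ‖u‖ ^ 2 * ‖d - e‖ ^ 2 := by rw [norm_sub_rev, mul_pow]

theorem tsum_norm_inner_sq_le_of_inner_eq_zero {u : E} {d e : ι → E}
    (hu : ∀ n, ⟪u, d n⟫_𝕜 = 0) (he : Summable fun n => ‖⟪u, e n⟫_𝕜‖ ^ 2)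
    (hd : Summable fun n => ‖d n - e n‖ ^ 2) :
    ∑' n, ‖⟪u, e n⟫_𝕜‖ ^ 2 ≤ ‖u‖ ^ 2 * ∑' n, ‖d n - e n‖ ^ 2 := by
  rw [← tsum_mul_left]
  exact he.tsum_le_tsum (fun n => norm_inner_sq_le_of_inner_eq_zero (hu n)) (hd.mul_left _)

end

theorem stmt_19_general {H : Type*} [NormedAddCommGroup H] [InnerProductSpace ℂ H]
    (e d : ℕ → H) (a A : ℝ) (ha : 0 < a)
    (hframe : ∀ u : H, Summable (fun n => ‖(inner ℂ u (e n) : ℂ)‖ ^ 2) ∧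
      a * ‖u‖ ^ 2 ≤ ∑' n, ‖(inner ℂ u (e n) : ℂ)‖ ^ 2 ∧
      ∑' n, ‖(inner ℂ u (e n) : ℂ)‖ ^ 2 ≤ A * ‖u‖ ^ 2)
    (hd : Summable fun n => ‖d n - e n‖ ^ 2)
    (hlt : ∑' n, ‖d n - e n‖ ^ 2 < a ^ 2 / A) :
    ∀ u : H, (∀ n, (inner ℂ u (d n) : ℂ) = 0) → u = 0 := by
  intro u hu
  by_contra hu0
  have hnu : 0 < ‖u‖ ^ 2 := by positivity
  obtain ⟨hsum, hlow, hhigh⟩ := hframe u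
  have haA : a ≤ A := le_of_mul_le_mul_right (hlow.trans hhigh) hnu
  have hfrac : a ^ 2 / A ≤ a := by
    rw [div_le_iff₀ (ha.trans_le haA), sq]
    exact mul_le_mul_of_nonneg_left haA ha.le
  have : a * ‖u‖ ^ 2 < a * ‖u‖ ^ 2 :=
    calc a * ‖u‖ ^ 2 ≤ ∑' n, ‖(inner ℂ u (e n) : ℂ)‖ ^ 2 := hlow
      _ ≤ ‖u‖ ^ 2 * ∑' n, ‖d n - e n‖ ^ 2 :=
          tsum_norm_inner_sq_le_of_inner_eq_zero hu hsum hd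
      _ < ‖u‖ ^ 2 * (a ^ 2 / A) := mul_lt_mul_of_pos_left hlt hnu
      _ ≤ ‖u‖ ^ 2 * a := mul_le_mul_of_nonneg_left hfrac hnu.le
      _ = a * ‖u‖ ^ 2 := mul_comm _ _
  exact lt_irrefl _ this

theorem stmt_19 {H : Type*} [NormedAddCommGroup H] [InnerProductSpace ℂ H]
    [CompleteSpace H] (e d : ℕ → H) (a A : ℝ) (ha : 0 < a) (hA : 0 < A)
    (hcomplete : ∀ u : H, (∀ n, (inner ℂ u (e n) : ℂ) = 0) → u = 0)
    (hindep : ∀ c : ℕ → ℂ, Summable (fun n => ‖c n‖ ^ 2) →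
      HasSum (fun n => c n • e n) 0 → ∀ n, c n = 0)
    (hframe : ∀ u : H, Summable (fun n => ‖(inner ℂ u (e n) : ℂ)‖ ^ 2) ∧
      a * ‖u‖ ^ 2 ≤ ∑' n, ‖(inner ℂ u (e n) : ℂ)‖ ^ 2 ∧
      ∑' n, ‖(inner ℂ u (e n) : ℂ)‖ ^ 2 ≤ A * ‖u‖ ^ 2)
    (hd : Summable fun n => ‖d n - e n‖ ^ 2)
    (hlt : ∑' n, ‖d n - e n‖ ^ 2 < a ^ 2 / A) :
    ∀ u : H, (∀ n, (inner ℂ u (d n) : ℂ) = 0) → u = 0 :=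
  stmt_19_general e d a A ha hframe hd hlt
end
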